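/- Let p ∈ 𝕊^n, let {v_2,...,v_{n+1}} be an orthonormal basis of T_p 𝕊^n such that x = (p v_2 ... v_{n+1}) ∈ O(n+1), and let u ∈ T_p 𝕊^n. Let Z be the skew matrix with first row (0, -(u·v_2), ..., -(u·v_{n+1})), first column (0, (u·v_2), ..., (u·v_{n+1}))^T and zeros elsewhere. Then x Z x^{-1} = Φ(u,p) - Φ(p,u), where Φ(x,y) = x y^T. -/
import Mathlib


open Matrix

/-- `Phi x y` is the outer product matrix `x yᵀ`, entries `y_j x_i`. -/
def Phi {n : ℕ} (x y : Fin (n+1) → ℝ) : Matrix (Fin (n+1)) (Fin (n+1)) ℝ :=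
  Matrix.of fun i j => y j * x i

/-- The skew matrix `Z` with first row `(0, -(u·v₂), …)`, first column `(0, (u·v₂), …)ᵀ`
and zeros elsewhere, where `v_j` is the `j`-th column of `x`. -/
def Zmat {n : ℕ} (u : Fin (n+1) → ℝ) (x : Matrix (Fin (n+1)) (Fin (n+1)) ℝ) :
    Matrix (Fin (n+1)) (Fin (n+1)) ℝ :=
  Matrix.of fun i j =>
    if i = 0 then (if j = 0 then 0 else -(u ⬝ᵥ fun k => x k j))
    else if j = 0 then (u ⬝ᵥ fun k => x k i) else 0

theorem conj_Z_eq_Gamma (n : ℕ) (p u : Fin (n+1) → ℝ)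
    (x : Matrix (Fin (n+1)) (Fin (n+1)) ℝ)
    (hx : xᵀ * x = 1) (hcol : (fun i => x i 0) = p) (hu : u ⬝ᵥ p = 0) :
    x * Zmat u x * x⁻¹ = Phi u p - Phi p u := by
  have hx' : x * xᵀ = 1 := mul_eq_one_comm.mp hx
  have hinv : x⁻¹ = xᵀ := inv_eq_right_inv hx'
  set c : Fin (n+1) → ℝ := xᵀ *ᵥ u with hc
  have hc0 : c 0 = 0 := by
    have : c 0 = u ⬝ᵥ p := by
      rw [← hcol]
      simp [hc, mulVec, dotProduct, mul_comm]
    rw [this, hu]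
  set e0 : Fin (n+1) → ℝ := Pi.single 0 1 with he0
  have hZ : Zmat u x = vecMulVec c e0 - vecMulVec e0 c := by
    ext i j
    have hci : ∀ i, c i = u ⬝ᵥ fun k => x k i := by
      intro i; simp [hc, mulVec, dotProduct, mul_comm]
    by_cases hi : i = 0 <;> by_cases hj : j = 0 <;>
      simp [Zmat, vecMulVec_apply, hi, hj, he0, Pi.single_apply, hc0, ← hci]
  have key : x *ᵥ c = u := by
    rw [hc, mulVec_mulVec, hx', one_mulVec]
  have hxe0 : x *ᵥ e0 = p := by
    rw [← hcol]
    ext i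
    simp [he0, mulVec, dotProduct, Pi.single_apply]
  have conj : ∀ a b : Fin (n+1) → ℝ,
      x * vecMulVec a b * xᵀ = vecMulVec (x *ᵥ a) (x *ᵥ b) := by
    intro a b
    ext i j
    simp [vecMulVec, mul_apply, mulVec, dotProduct, Finset.sum_mul, Finset.mul_sum,
      mul_comm, mul_left_comm, transpose_apply]
  rw [hinv, hZ, Matrix.mul_sub, Matrix.sub_mul, conj, conj, key, hxe0]
  ext i j
  simp [vecMulVec, Phi, mul_comm]
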